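/- arXiv:2308.12521 — 6 statements merged into one kernel-verified Lean document; each statement's English description precedes it below -/
import Mathlib

section
/- The integral ∫_{-∞}^{∞} e^u(e^u - 1) / ((e^u + 1)^3 · u) du equals (7/(2π²))·ζ(3). -/
/-!
Write `K(t) = eᵗ(eᵗ - 1)/(eᵗ + 1)³`, an odd function, so the integral is `2 ∫₀^∞ K(t) t⁻¹ dt`,
the Mellin transform of `K` at `s = 0`. Expanding `K(t) = ∑ (-1)ⁿ⁺¹ n² e⁻ⁿᵗ` gives, for `re s > 3`,
`𝓜K(s) = Γ(s) (1 - 2³⁻ˢ) ζ(s - 2)`. At `s = 0` the pole of `Γ` meets the trivial zero `ζ(-2)`;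
the functional equation rewrites the right side in a form holomorphic near `0`, and by the
identity theorem it agrees with `𝓜K` there. Evaluating at `0` gives `7 ζ(3) / (4 π²)`.
-/

open Real MeasureTheory Complex Set Filter Topology Asymptotics

theorem hasSum_sq_mul_geometric_of_norm_lt_one {𝕜 : Type*} [NormedField 𝕜]
    [CompleteSpace 𝕜] {x : 𝕜} (hx : ‖x‖ < 1) :
    HasSum (fun n : ℕ ↦ (n : 𝕜) ^ 2 * x ^ n) (x * (1 + x) / (1 - x) ^ 3) := by
  have hx1 : 1 - x ≠ 0 := sub_ne_zero.mpr (by rintro rfl; simp at hx)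
  have h2 := hasSum_choose_mul_geometric_of_norm_lt_one 2 hx
  have h1 := hasSum_choose_mul_geometric_of_norm_lt_one 1 hx
  have h0 := hasSum_choose_mul_geometric_of_norm_lt_one 0 hx
  have hval : x * (1 + x) / (1 - x) ^ 3 =
      2 * (1 / (1 - x) ^ (2 + 1)) - 3 * (1 / (1 - x) ^ (1 + 1)) + 1 / (1 - x) ^ (0 + 1) := by
    field_simp
    ring
  rw [hval]
  -- `n ^ 2 = 2 * (n + 2).choose 2 - 3 * (n + 1) + 1`
  refine (((h2.mul_left 2).sub (h1.mul_left 3)).add h0).congr_fun fun n ↦ ?_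
  have hc : (n + 2).choose 2 * 2 = (n + 2) * (n + 1) := by
    have := Nat.add_one_mul_choose_eq (n + 1) 1
    rw [Nat.choose_one_right] at this
    exact this.symm
  have hc' : ((n + 2).choose 2 : 𝕜) * 2 = (n + 2) * (n + 1) :=
    mod_cast congrArg (Nat.cast (R := 𝕜)) hc
  rw [Nat.choose_one_right, Nat.choose_zero_right]
  push_cast
  linear_combination -x ^ n * hc'

theorem hasSum_neg_one_pow_div_nat_cpow {w : ℂ} (hw : 1 < w.re) :
    HasSum (fun n : ℕ ↦ (-1) ^ (n + 1) / (n : ℂ) ^ w)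
      ((1 - 2 ^ (1 - w)) * riemannZeta w) := by
  set f : ℕ → ℂ := fun n ↦ 1 / (n : ℂ) ^ w
  have hf : Summable f := Complex.summable_one_div_nat_cpow.mpr hw
  have hζ : HasSum f (riemannZeta w) := by
    rw [zeta_eq_tsum_one_div_nat_cpow hw]; exact hf.hasSum
  have heven : HasSum (fun k ↦ f (2 * k)) (2 ^ (-w) * riemannZeta w) :=
    (hζ.mul_left _).congr_fun fun k ↦ by
      simp only [f]
      rw [Nat.cast_mul, natCast_mul_natCast_cpow, Nat.cast_ofNat, cpow_neg, one_div, one_div,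
        mul_inv]
  have hodd : HasSum (fun k ↦ f (2 * k + 1)) (riemannZeta w - 2 ^ (-w) * riemannZeta w) := by
    have hsum : Summable fun k ↦ f (2 * k + 1) := hf.comp_injective fun a b h ↦ by omega
    have hsplit := (heven.even_add_odd hsum.hasSum).unique hζ
    convert hsum.hasSum using 1
    linear_combination -hsplit
  have h2 : (2 : ℂ) ^ (1 - w) = 2 * 2 ^ (-w) := by
    rw [sub_eq_add_neg, cpow_add _ _ two_ne_zero, cpow_one]
  have heven' : HasSum (fun k ↦ (-1) ^ (2 * k + 1) / ((2 * k : ℕ) : ℂ) ^ w)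
      (-(2 ^ (-w) * riemannZeta w)) :=
    heven.neg.congr_fun fun k ↦ by
      rw [pow_succ, pow_mul, neg_one_sq, one_pow, one_mul, neg_div]
  have hodd' : HasSum (fun k ↦ (-1) ^ (2 * k + 1 + 1) / ((2 * k + 1 : ℕ) : ℂ) ^ w)
      (riemannZeta w - 2 ^ (-w) * riemannZeta w) :=
    hodd.congr_fun fun k ↦ by
      rw [pow_succ, pow_succ, pow_mul, neg_one_sq, one_pow, one_mul, neg_one_mul, neg_neg]
  rw [h2]
  convert HasSum.even_add_odd (f := fun n : ℕ ↦ (-1 : ℂ) ^ (n + 1) / (n : ℂ) ^ w) heven' hodd'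
    using 1
  ring

theorem Gamma_mul_riemannZeta_sub_two {s : ℂ} (hs : ∀ n : ℤ, s ≠ n) :
    Gamma s * riemannZeta (s - 2) =
      -π * (2 * π) ^ (s - 3) * (2 - s) * (1 - s) * riemannZeta (3 - s) / cos (π * s / 2) := by
  have hπ : (π : ℂ) ≠ 0 := ofReal_ne_zero.mpr Real.pi_ne_zero
  have hfe := riemannZeta_one_sub (s := 3 - s)
    (fun n h ↦ hs (n + 3) (by push_cast; linear_combination -h))
    (fun h ↦ hs 2 (by push_cast; linear_combination -h))
  rw [show (1 : ℂ) - (3 - s) = s - 2 by ring, show -((3 : ℂ) - s) = s - 3 by ring] at hfe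
  have hcos : cos (π * (3 - s) / 2) = -sin (π * s / 2) := by
    rw [show (π : ℂ) * (3 - s) / 2 = π + (π / 2 - π * s / 2) by ring, Complex.cos_add,
      Complex.cos_pi, Complex.sin_pi, Complex.cos_pi_div_two_sub]
    ring
  have hGamma : Gamma (3 - s) = (2 - s) * ((1 - s) * Gamma (1 - s)) := by
    have h2 : (2 : ℂ) - s ≠ 0 := fun h ↦ hs 2 (by push_cast; linear_combination -h)
    have h1 : (1 : ℂ) - s ≠ 0 := fun h ↦ hs 1 (by push_cast; linear_combination -h)
    rw [show (3 : ℂ) - s = 2 - s + 1 by ring, Gamma_add_one _ h2,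
      show (2 : ℂ) - s = 1 - s + 1 by ring, Gamma_add_one _ h1]
  have hcos_ne : cos (π * s / 2) ≠ 0 := fun h ↦ by
    obtain ⟨k, hk⟩ := cos_eq_zero_iff.mp h
    exact hs (2 * k + 1) (by push_cast; exact mul_left_cancel₀ hπ (by linear_combination 2 * hk))
  have hsin_ne : sin (π * s) ≠ 0 := fun h ↦ by
    obtain ⟨k, hk⟩ := sin_eq_zero_iff.mp h
    exact hs k (mul_left_cancel₀ hπ (by linear_combination hk))
  have hrefl : Gamma s * Gamma (1 - s) * (2 * sin (π * s / 2) * cos (π * s / 2)) = π := by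
    rw [← Complex.sin_two_mul, show 2 * (π * s / 2) = π * s by ring,
      Complex.Gamma_mul_Gamma_one_sub, div_mul_cancel₀ _ hsin_ne]
  rw [hfe, hcos, hGamma, eq_div_iff hcos_ne]
  linear_combination (-(2 * π) ^ (s - 3) * (2 - s) * (1 - s) * riemannZeta (3 - s)) * hrefl

theorem integral_eq_two_mul_integral_Ioi_of_even {g : ℝ → ℝ} (hg : ∀ u, g (-u) = g u) :
    ∫ u, g u = 2 * ∫ u in Ioi 0, g u := by
  rw [← integral_comp_abs]
  congr 1 with u
  obtain h | h := abs_choice u <;> rw [h]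
  exact (hg u).symm

theorem mellin_ofReal_zero_eq_integral_div (f : ℝ → ℝ) :
    mellin (fun t ↦ (f t : ℂ)) 0 = ((∫ t in Ioi 0, f t / t : ℝ) : ℂ) := by
  rw [mellin, ← integral_complex_ofReal]
  refine setIntegral_congr_fun measurableSet_Ioi fun t _ ↦ ?_
  rw [zero_sub, cpow_neg_one, smul_eq_mul, ofReal_div, div_eq_inv_mul]

namespace ZetaThreeIntegral

noncomputable def kernel (t : ℝ) : ℝ := rexp t * (rexp t - 1) / (rexp t + 1) ^ 3

theorem kernel_neg (t : ℝ) : kernel (-t) = -kernel t := by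
  have : rexp t + 1 ≠ 0 := by positivity
  rw [kernel, kernel, Real.exp_neg]
  field_simp
  ring

theorem abs_kernel_le (t : ℝ) : |kernel t| ≤ rexp (-t) := by
  have hx := Real.exp_pos t
  rw [kernel, abs_div, abs_mul, abs_of_pos hx, abs_pow,
    abs_of_pos (by positivity : 0 < rexp t + 1), Real.exp_neg, div_le_iff₀ (by positivity),
    inv_mul_eq_div, le_div_iff₀ hx]
  have h1 : |rexp t - 1| ≤ rexp t + 1 := abs_le.mpr ⟨by linarith, by linarith⟩
  nlinarith [mul_le_mul_of_nonneg_left h1 (by positivity : 0 ≤ rexp t * rexp t)]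

theorem continuous_kernel : Continuous kernel :=
  .div (by fun_prop) (by fun_prop) fun t ↦ by positivity

theorem kernel_isBigO_atTop : (fun t ↦ (kernel t : ℂ)) =O[atTop] fun t ↦ rexp (-1 * t) :=
  isBigO_ofReal_left.mpr <| isBigO_of_le _ fun t ↦ by
    rw [Real.norm_eq_abs, Real.norm_of_nonneg (Real.exp_nonneg _), neg_one_mul]
    exact abs_kernel_le t

theorem kernel_isBigO_nhdsGT_zero :
    (fun t ↦ (kernel t : ℂ)) =O[𝓝[>] 0] (· ^ (-(-1 : ℝ))) := by
  have hd : DifferentiableAt ℝ kernel 0 := by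
    unfold kernel
    fun_prop (disch := positivity)
  have h0 : kernel 0 = 0 := by simp [kernel]
  have h : kernel =O[𝓝 0] fun t ↦ t := by simpa [h0] using hd.hasDerivAt.isBigO_sub
  exact isBigO_ofReal_left.mpr <|
    (h.mono nhdsWithin_le_nhds).congr_right fun t ↦ by rw [neg_neg, Real.rpow_one]

theorem hasSum_kernel {t : ℝ} (ht : 0 < t) :
    HasSum (fun n : ℕ ↦ (-1 : ℂ) ^ (n + 1) * (n : ℂ) ^ 2 * rexp (-n * t)) (kernel t) := by
  set q : ℝ := rexp (-t)
  have hq : ‖-(q : ℂ)‖ < 1 := by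
    rw [norm_neg, norm_real, Real.norm_of_nonneg (Real.exp_nonneg _)]
    exact Real.exp_lt_one_iff.mpr (by linarith)
  have hval : (kernel t : ℂ) = -(-q * (1 + -q) / (1 - -q) ^ 3) := by
    have : rexp t + 1 ≠ 0 := by positivity
    rw [kernel, show q = (rexp t)⁻¹ from Real.exp_neg t]
    push_cast
    field_simp
    ring
  rw [hval]
  refine (hasSum_sq_mul_geometric_of_norm_lt_one hq).neg.congr_fun fun n ↦ ?_
  rw [neg_mul, ← mul_neg, Real.exp_nat_mul, ofReal_pow, neg_pow]
  ring

theorem mellin_kernel {s : ℂ} (hs : 3 < s.re) :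
    mellin (fun t ↦ (kernel t : ℂ)) s =
      Gamma s * ((1 - 2 ^ (3 - s)) * riemannZeta (s - 2)) := by
  have hs2 : s - 2 ≠ 0 := fun h ↦ by
    have := congrArg re h
    simp only [sub_re, re_ofNat, zero_re] at this
    linarith
  have hterm (n : ℕ) : Gamma s * ((-1) ^ (n + 1) * (n : ℂ) ^ 2) / ((n : ℝ) : ℂ) ^ s =
      Gamma s * ((-1) ^ (n + 1) / (n : ℂ) ^ (s - 2)) := by
    rcases eq_or_ne n 0 with rfl | hn
    · simp [zero_cpow hs2]
    · rw [ofReal_natCast, cpow_sub _ _ (Nat.cast_ne_zero.mpr hn), cpow_ofNat]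
      field_simp
  have hsum : Summable fun n : ℕ ↦ ‖(-1 : ℂ) ^ (n + 1) * (n : ℂ) ^ 2‖ / (n : ℝ) ^ s.re := by
    refine (Real.summable_nat_rpow.mpr (by linarith : 2 - s.re < -1)).congr fun n ↦ ?_
    rw [Real.rpow_sub' (Nat.cast_nonneg n) (by linarith)]
    simp
  have h := hasSum_mellin (fun n ↦ ?_) (by linarith) (fun t ht ↦ hasSum_kernel ht) hsum
  · have hre : 1 < (s - 2).re := by rw [sub_re, re_ofNat]; linarith
    rw [show (3 : ℂ) - s = 1 - (s - 2) by ring]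
    exact h.unique (((hasSum_neg_one_pow_div_nat_cpow hre).mul_left _).congr_fun hterm)
  · rcases eq_or_ne n 0 with rfl | hn
    · simp
    · exact Or.inr (by positivity)

/-- `Γ(s) (1 - 2³⁻ˢ) ζ(s - 2)` after the functional equation for `ζ` and the reflection
formula for `Γ`; see `Gamma_mul_riemannZeta_sub_two`. -/
noncomputable def mellinKernelContinuation (s : ℂ) : ℂ :=
  (1 - 2 ^ (3 - s)) *
    (-π * (2 * π) ^ (s - 3) * (2 - s) * (1 - s) * riemannZeta (3 - s) / cos (π * s / 2))

/-- A connected open set joining `s = 0` to the half-plane `re s > 3` that avoids the real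
poles `s = 1, 2, 3` of `mellinKernelContinuation`. -/
def continuationDomain : Set ℂ := {s | -1 < s.re ∧ s.re < 1} ∪ {s | -1 < s.re ∧ 0 < s.im}

theorem isOpen_continuationDomain : IsOpen continuationDomain :=
  ((isOpen_lt continuous_const continuous_re).inter
    (isOpen_lt continuous_re continuous_const)).union
    ((isOpen_lt continuous_const continuous_re).inter
      (isOpen_lt continuous_const continuous_im))

theorem isPreconnected_continuationDomain : IsPreconnected continuationDomain :=
  ((convex_halfSpace_re_gt _).inter (convex_halfSpace_re_lt _)).isPreconnected.union (I / 2)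
    (by simp) (by simp) ((convex_halfSpace_re_gt _).inter (convex_halfSpace_im_gt _)).isPreconnected

theorem cos_ne_zero_of_mem_continuationDomain {s : ℂ} (hs : s ∈ continuationDomain) :
    cos (π * s / 2) ≠ 0 := fun h ↦ by
  obtain ⟨k, hk⟩ := cos_eq_zero_iff.mp h
  have hs' : s = 2 * k + 1 := mul_left_cancel₀ (ofReal_ne_zero.mpr Real.pi_ne_zero)
    (by linear_combination 2 * hk)
  rcases hs with ⟨h₁, h₂⟩ | ⟨-, h⟩
  · have hre : s.re = 2 * k + 1 := by simp [hs']
    have hk₁ : k < 0 := by exact_mod_cast (by linarith : (k : ℝ) < 0)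
    have hk₂ : -1 < k := by exact_mod_cast (by linarith : (-1 : ℝ) < k)
    omega
  · simp [hs'] at h

theorem differentiableOn_mellinKernelContinuation :
    DifferentiableOn ℂ mellinKernelContinuation continuationDomain := fun s hs ↦ by
  have hs2 : 3 - s ≠ 1 := fun h ↦ by
    rcases hs with ⟨-, h'⟩ | ⟨-, h'⟩ <;>
    · rw [show s = 2 by linear_combination -h] at h'
      norm_num at h'
  refine DifferentiableAt.differentiableWithinAt ?_
  unfold mellinKernelContinuation
  have hζ : DifferentiableAt ℂ (fun s ↦ riemannZeta (3 - s)) s :=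
    (differentiableAt_riemannZeta hs2).comp s (by fun_prop)
  have := cos_ne_zero_of_mem_continuationDomain hs
  fun_prop (disch := first | assumption | norm_num)

theorem differentiableOn_mellin_kernel :
    DifferentiableOn ℂ (mellin fun t ↦ (kernel t : ℂ)) continuationDomain := fun s hs ↦
  (mellin_differentiableAt_of_isBigO_rpow_exp one_pos
    ((continuous_ofReal.comp continuous_kernel).locallyIntegrable.locallyIntegrableOn _)
    kernel_isBigO_atTop kernel_isBigO_nhdsGT_zero
    (by rcases hs with h | h <;> exact h.1)).differentiableWithinAt

theorem mellin_kernel_eqOn :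
    EqOn (mellin fun t ↦ (kernel t : ℂ)) mellinKernelContinuation continuationDomain := by
  have hopen : IsOpen {s : ℂ | 3 < s.re ∧ 0 < s.im} :=
    (isOpen_lt continuous_const continuous_re).inter (isOpen_lt continuous_const continuous_im)
  refine (differentiableOn_mellin_kernel.analyticOnNhd isOpen_continuationDomain)
    |>.eqOn_of_preconnected_of_eventuallyEq
      (differentiableOn_mellinKernelContinuation.analyticOnNhd isOpen_continuationDomain)
      isPreconnected_continuationDomain (z₀ := 4 + I) (Or.inr (by norm_num)) ?_
  filter_upwards [hopen.mem_nhds (by norm_num)] with s ⟨hre, him⟩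
  have hs : ∀ n : ℤ, s ≠ n := fun n h ↦ by simp [h] at him
  rw [mellin_kernel hre, mul_left_comm, Gamma_mul_riemannZeta_sub_two hs, mellinKernelContinuation]

theorem mellinKernelContinuation_zero :
    mellinKernelContinuation 0 = 7 * riemannZeta 3 / (4 * π ^ 2) := by
  have hπ : (π : ℂ) ≠ 0 := ofReal_ne_zero.mpr Real.pi_ne_zero
  rw [mellinKernelContinuation, mul_zero, zero_div, Complex.cos_zero, sub_zero, zero_sub,
    show (3 : ℂ) = (3 : ℕ) by norm_num, cpow_neg, cpow_natCast, cpow_natCast]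
  field_simp
  norm_num
  ring

theorem integral_kernel_div_eq_two_mul_mellin :
    ((∫ u, kernel u / u : ℝ) : ℂ) = 2 * mellin (fun t ↦ (kernel t : ℂ)) 0 := by
  rw [integral_eq_two_mul_integral_Ioi_of_even fun u ↦ by rw [kernel_neg, neg_div_neg_eq],
    mellin_ofReal_zero_eq_integral_div, ofReal_mul, ofReal_ofNat]

end ZetaThreeIntegral

theorem stmt_0 :
    ((∫ u : ℝ, Real.exp u * (Real.exp u - 1) / ((Real.exp u + 1) ^ 3 * u) : ℝ) : ℂ) =
      7 / (2 * (Real.pi : ℂ) ^ 2) * riemannZeta 3 := by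
  have hπ : (π : ℂ) ≠ 0 := ofReal_ne_zero.mpr Real.pi_ne_zero
  have h0 : (0 : ℂ) ∈ ZetaThreeIntegral.continuationDomain := Or.inl (by norm_num)
  have hintegrand : (fun u ↦ rexp u * (rexp u - 1) / ((rexp u + 1) ^ 3 * u)) =
      fun u ↦ ZetaThreeIntegral.kernel u / u := funext fun u ↦ (div_div _ _ _).symm
  rw [hintegrand, ZetaThreeIntegral.integral_kernel_div_eq_two_mul_mellin,
    ZetaThreeIntegral.mellin_kernel_eqOn h0, ZetaThreeIntegral.mellinKernelContinuation_zero]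
  field_simp
  ring
end

section
/- ζ(3) = (1/7) · ∫_0^π x(π − x)/sin(x) dx. -/
/-!
The cube-weighted sine series Σ sin(n y)/n³ is a Bernoulli polynomial on [0, 2π]; subtracting
its even terms leaves Σ_k sin((2k+1)x)/(2k+1)³ = π x (π - x)/8 on [0, π]. Dividing by sin x,
each term sin((2k+1)x)/sin x is a Dirichlet kernel with integral π over [0, π] and is bounded by
2k+1, so dominated convergence integrates the series termwise:
∫₀^π x(π-x)/sin x dx = Σ 8/(2k+1)³ = 8 (1 - 2⁻³) ζ(3) = 7 ζ(3).
-/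

open Real MeasureTheory Interval

theorem HasSum.odd_of_even {E : Type*} [AddCommGroup E] [TopologicalSpace E]
    [IsTopologicalAddGroup E] {f : ℕ → E} {a b : E} (hf : HasSum f a)
    (he : HasSum (fun k ↦ f (2 * k)) b) : HasSum (fun k ↦ f (2 * k + 1)) (a - b) := by
  have hrange : (Set.range (2 * · : ℕ → ℕ))ᶜ = Set.range (2 * · + 1) := by
    ext n
    simp [Nat.not_even_iff_odd]
  have he' : HasSum (f ∘ (↑) : Set.range (2 * · : ℕ → ℕ) → E) b :=
    (Function.Injective.hasSum_range_iff fun i j h ↦ by simpa using h).mpr he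
  have ho : HasSum (f ∘ (↑) : ↥(Set.range (2 * · : ℕ → ℕ))ᶜ → E) (a - b) :=
    he'.hasSum_compl_iff.mpr (by rwa [add_sub_cancel])
  rw [hrange] at ho
  exact (Function.Injective.hasSum_range_iff fun i j h ↦ by simpa using h).mp ho

theorem hasSum_one_div_two_mul_add_one_pow {p : ℕ} (hp : 1 < p) :
    HasSum (fun k : ℕ ↦ 1 / (2 * k + 1 : ℝ) ^ p)
      ((1 - 1 / 2 ^ p) * ∑' n : ℕ, 1 / (n : ℝ) ^ p) := by
  have hζ := (Real.summable_one_div_nat_pow.mpr hp).hasSum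
  have heven := hζ.mul_left (1 / 2 ^ p)
  have hterm (k : ℕ) : 1 / 2 ^ p * (1 / (k : ℝ) ^ p) = 1 / ((2 * k : ℕ) : ℝ) ^ p := by
    push_cast
    rw [mul_pow, one_div_mul_one_div]
  simp only [hterm] at heven
  have h := hζ.odd_of_even heven
  push_cast at h
  rwa [← one_sub_mul] at h

theorem abs_sin_nat_mul_le (n : ℕ) (x : ℝ) : |sin (n * x)| ≤ n * |sin x| := by
  induction n with
  | zero => simp
  | succ n ih =>
    calc |sin (((n + 1 : ℕ) : ℝ) * x)| = |sin (n * x) * cos x + cos (n * x) * sin x| := by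
          push_cast; rw [add_mul, one_mul, sin_add]
      _ ≤ |sin (n * x)| * |cos x| + |cos (n * x)| * |sin x| := by
          rw [← abs_mul, ← abs_mul]; exact abs_add_le _ _
      _ ≤ n * |sin x| * 1 + 1 * |sin x| := by
          gcongr
          · exact abs_cos_le_one x
          · exact abs_cos_le_one _
      _ = (n + 1 : ℕ) * |sin x| := by push_cast; ring

theorem abs_sin_nat_mul_div_sin_le (n : ℕ) (x : ℝ) : |sin (n * x) / sin x| ≤ n := by
  rw [abs_div]
  exact div_le_of_le_mul₀ (abs_nonneg _) n.cast_nonneg (abs_sin_nat_mul_le n x)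

theorem sin_two_mul_add_one_mul (k : ℕ) (x : ℝ) :
    sin ((2 * k + 1) * x) = sin x * (1 + 2 * ∑ j ∈ Finset.range k, cos (2 * (j + 1) * x)) := by
  induction k with
  | zero => simp
  | succ k ih =>
    have h := sin_sub_sin ((2 * (k + 1) + 1) * x) ((2 * k + 1) * x)
    rw [show ((2 * (k + 1) + 1) * x - (2 * k + 1) * x) / 2 = x by ring,
      show ((2 * (k + 1) + 1) * x + (2 * k + 1) * x) / 2 = 2 * (k + 1) * x by ring] at h
    push_cast
    rw [Finset.sum_range_succ]
    linear_combination h + ih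

theorem integral_cos_nat_mul_eq_zero {n : ℕ} (hn : n ≠ 0) :
    ∫ x in (0 : ℝ)..π, cos (n * x) = 0 := by
  rw [intervalIntegral.integral_comp_mul_left (fun y ↦ cos y) (Nat.cast_ne_zero.mpr hn),
    integral_cos, mul_zero, sin_zero, sub_zero, sin_nat_mul_pi, smul_zero]

theorem integral_sin_two_mul_add_one_mul_div_sin (k : ℕ) :
    ∫ x in (0 : ℝ)..π, sin ((2 * k + 1) * x) / sin x = π := by
  have hkernel : ∀ᵐ x, x ∈ Ι (0 : ℝ) π →
      sin ((2 * k + 1) * x) / sin x = 1 + 2 * ∑ j ∈ Finset.range k, cos (2 * (j + 1) * x) := by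
    filter_upwards [Measure.ae_ne volume π] with x hxπ hx
    rw [Set.uIoc_of_le pi_pos.le] at hx
    have hsin : sin x ≠ 0 := (sin_pos_of_pos_of_lt_pi hx.1 (hx.2.lt_of_ne hxπ)).ne'
    rw [sin_two_mul_add_one_mul, mul_div_cancel_left₀ _ hsin]
  have hcos (j : ℕ) : IntervalIntegrable (fun x ↦ cos (2 * (j + 1) * x)) volume 0 π := by
    apply Continuous.intervalIntegrable; fun_prop
  have hcos_zero (j : ℕ) : ∫ x in (0 : ℝ)..π, cos (2 * (j + 1) * x) = 0 := by
    exact_mod_cast integral_cos_nat_mul_eq_zero (n := 2 * (j + 1)) (by omega)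
  rw [intervalIntegral.integral_congr_ae hkernel, intervalIntegral.integral_add
    intervalIntegrable_const (by apply Continuous.intervalIntegrable; fun_prop),
    intervalIntegral.integral_const_mul, intervalIntegral.integral_finsetSum fun j _ ↦ hcos j]
  simp [hcos_zero]

theorem eval_map_bernoulli_three (t : ℝ) :
    (Polynomial.map (algebraMap ℚ ℝ) (Polynomial.bernoulli 3)).eval t =
      t ^ 3 - 3 / 2 * t ^ 2 + 1 / 2 * t := by
  simp [Polynomial.bernoulli, Finset.sum_range_succ, bernoulli_eq_bernoulli'_of_ne_one]
  ring

theorem hasSum_sin_mul_div_pow_three {y : ℝ} (h0 : 0 ≤ y) (h2π : y ≤ 2 * π) :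
    HasSum (fun n : ℕ ↦ sin (n * y) / (n : ℝ) ^ 3)
      (π ^ 2 * y / 6 - π * y ^ 2 / 4 + y ^ 3 / 12) := by
  have hy : y / (2 * π) ∈ Set.Icc (0 : ℝ) 1 :=
    ⟨by positivity, (div_le_one (by positivity)).mpr h2π⟩
  have h := hasSum_one_div_nat_pow_mul_sin one_ne_zero hy
  have hterm (n : ℕ) : 1 / (n : ℝ) ^ (2 * 1 + 1) * sin (2 * π * n * (y / (2 * π))) =
      sin (n * y) / (n : ℝ) ^ 3 := by
    rw [show 2 * π * n * (y / (2 * π)) = n * y by field_simp]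
    ring
  have hvalue : (-1 : ℝ) ^ (1 + 1) * (2 * π) ^ (2 * 1 + 1) / 2 / (2 * 1 + 1).factorial *
      (Polynomial.map (algebraMap ℚ ℝ) (Polynomial.bernoulli (2 * 1 + 1))).eval (y / (2 * π)) =
      π ^ 2 * y / 6 - π * y ^ 2 / 4 + y ^ 3 / 12 := by
    rw [show 2 * 1 + 1 = 3 from rfl, eval_map_bernoulli_three]
    norm_num [Nat.factorial]
    field_simp
    ring
  simpa only [hterm, hvalue] using h

theorem hasSum_sin_two_mul_add_one_mul_div_pow_three {x : ℝ} (h0 : 0 ≤ x) (hπ : x ≤ π) :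
    HasSum (fun k : ℕ ↦ sin ((2 * k + 1) * x) / (2 * k + 1 : ℝ) ^ 3)
      (π * x * (π - x) / 8) := by
  have heven :=
    (hasSum_sin_mul_div_pow_three (y := 2 * x) (by linarith) (by linarith)).div_const 8
  have hterm (k : ℕ) : sin (k * (2 * x)) / (k : ℝ) ^ 3 / 8 =
      sin ((2 * k : ℕ) * x) / ((2 * k : ℕ) : ℝ) ^ 3 := by
    push_cast
    ring_nf
  simp only [hterm] at heven
  have h := (hasSum_sin_mul_div_pow_three h0 (by linarith)).odd_of_even heven
  push_cast at h
  rwa [show π ^ 2 * x / 6 - π * x ^ 2 / 4 + x ^ 3 / 12 -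
    (π ^ 2 * (2 * x) / 6 - π * (2 * x) ^ 2 / 4 + (2 * x) ^ 3 / 12) / 8 = π * x * (π - x) / 8 by
    ring] at h

theorem hasSum_integral_mul_pi_sub_div_sin :
    HasSum (fun k : ℕ ↦ 8 / (2 * k + 1 : ℝ) ^ 3) (∫ x in (0 : ℝ)..π, x * (π - x) / sin x) := by
  set F : ℕ → ℝ → ℝ := fun k x ↦ 8 / π / (2 * k + 1) ^ 3 * (sin ((2 * k + 1) * x) / sin x)
  have hbound (k : ℕ) (x : ℝ) : ‖F k x‖ ≤ 8 / π / (2 * k + 1) ^ 2 := by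
    calc ‖F k x‖ ≤ 8 / π / (2 * k + 1) ^ 3 * (2 * k + 1) := by
          rw [norm_mul, Real.norm_of_nonneg (by positivity), Real.norm_eq_abs]
          gcongr
          exact_mod_cast abs_sin_nat_mul_div_sin_le (2 * k + 1) x
      _ = 8 / π / (2 * k + 1) ^ 2 := by field_simp
  have hsummable : Summable fun k : ℕ ↦ 8 / π / (2 * k + 1 : ℝ) ^ 2 := by
    simpa only [mul_one_div] using
      ((hasSum_one_div_two_mul_add_one_pow one_lt_two).mul_left (8 / π)).summable
  -- Also valid where `sin x = 0`, since there both sides are `_ / 0 = 0`.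
  have hlim (x : ℝ) (h0 : 0 ≤ x) (hπ : x ≤ π) :
      HasSum (fun k ↦ F k x) (x * (π - x) / sin x) := by
    have h := (hasSum_sin_two_mul_add_one_mul_div_pow_three h0 hπ).mul_left (8 / (π * sin x))
    have hterm (k : ℕ) :
        8 / (π * sin x) * (sin ((2 * k + 1) * x) / (2 * k + 1 : ℝ) ^ 3) = F k x := by
      simp only [F]
      ring
    have hvalue : 8 / (π * sin x) * (π * x * (π - x) / 8) = x * (π - x) / sin x := by field_simp
    simpa only [hterm, hvalue] using h
  have hintegral (k : ℕ) : ∫ x in (0 : ℝ)..π, F k x = 8 / (2 * k + 1) ^ 3 := by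
    rw [intervalIntegral.integral_const_mul, integral_sin_two_mul_add_one_mul_div_sin]
    field_simp
  simp only [← hintegral]
  refine intervalIntegral.hasSum_integral_of_dominated_convergence
    (fun k _ ↦ 8 / π / (2 * k + 1) ^ 2) (fun k ↦ (Measurable.aestronglyMeasurable (by fun_prop)))
    (fun k ↦ .of_forall fun x _ ↦ hbound k x) (.of_forall fun _ _ ↦ hsummable)
    intervalIntegrable_const (.of_forall fun x hx ↦ ?_)
  rw [Set.uIoc_of_le pi_pos.le] at hx
  exact hlim x hx.1.le hx.2

theorem stmt_3 :
    riemannZeta 3 =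
      (1 / 7 : ℂ) * ↑(∫ x in (0 : ℝ)..Real.pi, x * (Real.pi - x) / Real.sin x) := by
  have hodd := (hasSum_one_div_two_mul_add_one_pow (by norm_num : 1 < 3)).mul_left 8
  simp only [mul_one_div] at hodd
  have hintegral : ∫ x in (0 : ℝ)..π, x * (π - x) / sin x = 7 * ∑' n : ℕ, 1 / (n : ℝ) ^ 3 := by
    rw [hasSum_integral_mul_pi_sub_div_sin.unique hodd]
    ring
  have hζ : riemannZeta 3 = ∑' n : ℕ, 1 / (n : ℂ) ^ 3 := by
    exact_mod_cast zeta_nat_eq_tsum_of_gt_one (k := 3) (by norm_num)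
  rw [hintegral, hζ, Complex.ofReal_mul, Complex.ofReal_tsum]
  push_cast
  ring
end

section
/- For every positive integer l, the residue of (e^z + 1)^{−l} at the pole z = iπ equals −1 (independent of l). -/
open Real

/-!
For `m ≥ 1` the derivative of `(eᶻ + 1)⁻ᵐ` is `m ((eᶻ + 1)⁻⁽ᵐ⁺¹⁾ - (eᶻ + 1)⁻ᵐ)`, because
`eᶻ = (eᶻ + 1) - 1`; an exact derivative integrates to zero over a circle, so all the integrals
`∮ (eᶻ + 1)⁻ˡ` agree with the one for `l = 1`. That one is computed by the Cauchy integral formula: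
`iπ` is a simple zero of `eᶻ + 1`, the only one within distance `2π`, with derivative `e^{iπ} = -1`.
-/

open Metric Set

theorem Complex.exp_ne_exp_of_norm_sub_lt {z w : ℂ} (hne : z ≠ w) (hlt : ‖z - w‖ < 2 * π) :
    Complex.exp z ≠ Complex.exp w := by
  rw [Ne, Complex.exp_eq_exp_iff_exists_int]
  rintro ⟨n, rfl⟩
  have hn : n ≠ 0 := by rintro rfl; simp at hne
  have h1 : (1 : ℝ) ≤ |(n : ℝ)| := by exact_mod_cast Int.one_le_abs hn
  have hnorm : ‖(n : ℂ) * (2 * π * Complex.I)‖ = |(n : ℝ)| * (2 * π) := by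
    simp [abs_of_pos pi_pos]
  rw [add_sub_cancel_left, hnorm] at hlt
  nlinarith [pi_pos]

theorem two_pi_I_inv_mul_circleIntegral_inv_of_simple_zero {f : ℂ → ℂ} {U : Set ℂ} {c : ℂ}
    {R : ℝ} (hU : IsOpen U) (hR : 0 < R) (hcU : closedBall c R ⊆ U) (hf : DifferentiableOn ℂ f U)
    (hfc : f c = 0) (hf' : deriv f c ≠ 0) (hf0 : ∀ z ∈ closedBall c R, z ≠ c → f z ≠ 0) :
    (2 * π * Complex.I)⁻¹ * (∮ z in C(c, R), (f z)⁻¹) = (deriv f c)⁻¹ := by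
  have hfactor : ∀ z, f z = (z - c) * dslope f c z := fun z => by
    rw [← smul_eq_mul, sub_smul_dslope, hfc, sub_zero]
  have hslope0 : ∀ z ∈ closedBall c R, dslope f c z ≠ 0 := by
    intro z hz
    rcases eq_or_ne z c with rfl | hzc
    · rwa [dslope_same]
    · exact right_ne_zero_of_mul (hfactor z ▸ hf0 z hz hzc)
  have hslope : DifferentiableOn ℂ (dslope f c) U :=
    (Complex.differentiableOn_dslope (hU.mem_nhds (hcU (mem_closedBall_self hR.le)))).2 hf
  have hg : DiffContOnCl ℂ (fun z => (dslope f c z)⁻¹) (ball c R) :=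
    ((hslope.mono hcU).inv hslope0).diffContOnCl_ball subset_rfl
  have hcauchy := hg.two_pi_i_inv_smul_circleIntegral_sub_inv_smul (mem_ball_self hR)
  rw [dslope_same] at hcauchy
  rw [← hcauchy, smul_eq_mul]
  congr 1
  refine circleIntegral.integral_congr hR.le fun z _ => ?_
  rw [hfactor z, mul_inv, smul_eq_mul]

theorem hasDerivAt_inv_exp_add_one_pow {z : ℂ} (hz : Complex.exp z + 1 ≠ 0) (m : ℕ) :
    HasDerivAt (fun w => ((Complex.exp w + 1) ^ m)⁻¹)
      (m * (((Complex.exp z + 1) ^ (m + 1))⁻¹ - ((Complex.exp z + 1) ^ m)⁻¹)) z := by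
  refine ((((Complex.hasDerivAt_exp z).add_const 1).fun_pow m).inv
    (pow_ne_zero m hz)).congr_deriv ?_
  rcases m with _ | k
  · simp
  · field_simp
    push_cast
    ring

theorem circleIntegral_inv_exp_add_one_pow_succ {c : ℂ} {R : ℝ} (hR : 0 ≤ R)
    (h : ∀ z ∈ sphere c R, Complex.exp z + 1 ≠ 0) {m : ℕ} (hm : m ≠ 0) :
    (∮ z in C(c, R), ((Complex.exp z + 1) ^ (m + 1))⁻¹)
      = ∮ z in C(c, R), ((Complex.exp z + 1) ^ m)⁻¹ := by
  have hint : ∀ n : ℕ, CircleIntegrable (fun z => ((Complex.exp z + 1) ^ n)⁻¹) c R := fun n =>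
    ((by fun_prop : Continuous fun z => (Complex.exp z + 1) ^ n).continuousOn.inv₀
      fun z hz => pow_ne_zero n (h z hz)).circleIntegrable hR
  have hzero := circleIntegral.integral_eq_zero_of_hasDerivWithinAt hR
    fun z hz => (hasDerivAt_inv_exp_add_one_pow (h z hz) m).hasDerivWithinAt
  rw [circleIntegral.integral_const_mul, circleIntegral.integral_sub (hint _) (hint _)] at hzero
  exact sub_eq_zero.1 ((mul_eq_zero.1 hzero).resolve_left (Nat.cast_ne_zero.2 hm))

theorem stmt_7 (l : ℕ) (hl : 0 < l) (ε : ℝ) (hε : 0 < ε) (hε' : ε < 2 * Real.pi) :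
    (2 * Real.pi * Complex.I)⁻¹ *
        (∮ z in C(Real.pi * Complex.I, ε), ((Complex.exp z + 1) ^ l)⁻¹) = -1 := by
  set c : ℂ := π * Complex.I
  have hexp_c : Complex.exp c = -1 := Complex.exp_pi_mul_I
  have hne : ∀ z ∈ closedBall c ε, z ≠ c → Complex.exp z + 1 ≠ 0 := fun z hz hzc => by
    rw [Ne, add_eq_zero_iff_eq_neg, ← hexp_c]
    exact Complex.exp_ne_exp_of_norm_sub_lt hzc ((mem_closedBall_iff_norm.1 hz).trans_lt hε')
  have hsphere : ∀ z ∈ sphere c ε, Complex.exp z + 1 ≠ 0 := fun z hz =>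
    hne z (sphere_subset_closedBall hz) (ne_of_mem_sphere hz hε.ne')
  induction l, hl using Nat.le_induction with
  | base =>
    simp_rw [pow_one]
    rw [two_pi_I_inv_mul_circleIntegral_inv_of_simple_zero isOpen_univ hε (subset_univ _)
      (by fun_prop : Differentiable ℂ fun z => Complex.exp z + 1).differentiableOn
      (by rw [hexp_c]; ring) (by simp [hexp_c]) hne]
    simp [hexp_c]
  | succ m hm ih =>
    rwa [circleIntegral_inv_exp_add_one_pow_succ hε.le hsphere (by omega)]
end

section
/- The generalized Bernoulli numbers satisfy the Srivastava–Todorov formula: B_n^{(l)} = ∑_{k=0}^n C(l+n, n−k) · C(l+k−1, k) · (n!/(n+k)!) · ∑_{j=0}^k (−1)^j C(k,j) j^{n+k}. -/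
open Nat Finset

/-- The generalized Bernoulli numbers $B_n^{(l)}$ of order $l$. -/
noncomputable def genBernoulli (l n : ℕ) : ℚ :=
  (n ! : ℚ) * PowerSeries.coeff n ((PowerSeries.mk fun k => (1 : ℚ) / (k + 1)!)⁻¹ ^ l)

/-!
Write `F = (e^z - 1)/z`, so that `B_n^{(l)} / n!` is the `n`-th coefficient of `F⁻ˡ = (1 - u)⁻ˡ`
with `u = 1 - F`. As `u` has no constant term, modulo `z^(n+1)` the binomial series
`(1 - u)⁻ˡ = ∑ₘ C(l+m-1, m) uᵐ` may be truncated at `m = n`. Expanding `uᵐ = (1 + (-F))ᵐ` and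
summing over `m` with the hockey-stick identity turns the truncation into
`∑ₖ C(l+n, n-k) C(l+k-1, k) (-F)ᵏ`, and `zᵏ (-F)ᵏ = (1 - eᶻ)ᵏ = ∑ⱼ (-1)ʲ C(k, j) e^(jz)`.
-/

open PowerSeries

namespace Nat

theorem multichoose_add_mul_choose (l k d : ℕ) :
    l.multichoose (k + d) * (k + d).choose k = l.multichoose k * (l + k).multichoose d := by
  rcases l with _ | l
  · rcases k with _ | k
    · simp
    · rw [add_right_comm]; simp
  · simp only [multichoose_eq]
    rw [show l + 1 + (k + d) - 1 = l + k + d by omega, show l + 1 + k - 1 = l + k by omega,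
      show l + 1 + k + d - 1 = l + k + d by omega, choose_symm_add, choose_mul (by omega),
      add_tsub_cancel_right, add_tsub_cancel_right, mul_comm]

theorem sum_range_multichoose_mul_choose {l n k : ℕ} (h : k ≤ n) :
    ∑ m ∈ range (n + 1), l.multichoose m * m.choose k =
      (l + n).choose (n - k) * l.multichoose k := by
  obtain ⟨e, rfl⟩ := Nat.exists_eq_add_of_le h
  rw [show k + e + 1 = k + (e + 1) by ring, sum_range_add,
    sum_eq_zero fun m hm => by rw [choose_eq_zero_of_lt (mem_range.1 hm), mul_zero]]
  simp only [multichoose_add_mul_choose, ← mul_sum, sum_range_multichoose, zero_add]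
  rw [mul_comm, add_tsub_cancel_left, choose_symm_of_eq_add (by ring),
    show e + (l + k) = l + (k + e) by ring]

end Nat

theorem sum_multichoose_mul_one_add_pow {R : Type*} [CommSemiring R] (l n : ℕ) (z : R) :
    ∑ m ∈ range (n + 1), (l.multichoose m : R) * (1 + z) ^ m =
      ∑ k ∈ range (n + 1), ((l + n).choose (n - k) * l.multichoose k : ℕ) * z ^ k := by
  have expand : ∀ m ∈ range (n + 1),
      (1 + z) ^ m = ∑ k ∈ range (n + 1), (m.choose k : R) * z ^ k := by
    intro m hm
    rw [add_comm, add_pow]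
    refine sum_subset (range_subset_range.2 (mem_range.1 hm)) (fun k _ hk => ?_) |>.trans ?_
    · rw [choose_eq_zero_of_lt (by simpa using hk)]; simp
    · simp [mul_comm]
  rw [sum_congr rfl fun m hm => by rw [expand m hm]]
  simp only [mul_sum]
  rw [sum_comm]
  refine sum_congr rfl fun k hk => ?_
  rw [← sum_range_multichoose_mul_choose (mem_range_succ_iff.1 hk), cast_sum, sum_mul]
  refine sum_congr rfl fun m _ => ?_
  push_cast; ring

theorem one_sub_mul_sum_range_multichoose_succ {R : Type*} [CommRing R] (l n : ℕ) (u : R) :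
    (1 - u) * ∑ m ∈ range (n + 1), ((l + 1).multichoose m : R) * u ^ m =
      ∑ m ∈ range (n + 1), (l.multichoose m : R) * u ^ m - (l + 1).multichoose n * u ^ (n + 1) := by
  have shift_succ : ∑ m ∈ range (n + 1), ((l + 1).multichoose m : R) * u ^ m =
      ∑ m ∈ range n, (l.multichoose (m + 1) : R) * u ^ (m + 1) +
        ∑ m ∈ range n, ((l + 1).multichoose m : R) * u ^ (m + 1) + 1 := by
    simp [sum_range_succ' _ n, multichoose_succ_succ, add_mul, sum_add_distrib]
  have shift : ∑ m ∈ range (n + 1), (l.multichoose m : R) * u ^ m =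
      ∑ m ∈ range n, (l.multichoose (m + 1) : R) * u ^ (m + 1) + 1 := by
    simp [sum_range_succ' _ n]
  have mul_u : u * ∑ m ∈ range (n + 1), ((l + 1).multichoose m : R) * u ^ m =
      ∑ m ∈ range n, ((l + 1).multichoose m : R) * u ^ (m + 1) +
        (l + 1).multichoose n * u ^ (n + 1) := by
    rw [mul_sum, sum_range_succ]
    congr 1
    · exact sum_congr rfl fun m _ => by ring
    · ring
  linear_combination shift_succ - mul_u - shift

theorem pow_dvd_one_sub_pow_mul_sum_multichoose_sub_one {R : Type*} [CommRing R] (l n : ℕ) (u : R) :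
    u ^ (n + 1) ∣ (1 - u) ^ l * ∑ m ∈ range (n + 1), (l.multichoose m : R) * u ^ m - 1 := by
  induction l with
  | zero => simp [sum_range_succ']
  | succ l ih =>
    obtain ⟨c, hc⟩ := ih
    refine ⟨c - (1 - u) ^ l * (l + 1).multichoose n, ?_⟩
    rw [pow_succ, mul_assoc, one_sub_mul_sum_range_multichoose_succ]
    linear_combination hc

theorem PowerSeries.coeff_inv_pow_eq_of_X_pow_dvd {K : Type*} [Field K] {A B : K⟦X⟧}
    (hA : constantCoeff A ≠ 0) {l n : ℕ} (h : X ^ (n + 1) ∣ A ^ l * B - 1) :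
    coeff n (A⁻¹ ^ l) = coeff n B := by
  have hdiff : X ^ (n + 1) ∣ A⁻¹ ^ l - B := by
    have : A⁻¹ ^ l - B = -A⁻¹ ^ l * (A ^ l * B - 1) := by
      rw [neg_mul, mul_sub, ← mul_assoc, ← mul_pow, PowerSeries.inv_mul_cancel A hA, one_pow]
      ring
    exact this ▸ dvd_mul_of_dvd_right h _
  exact sub_eq_zero.1 (by simpa using X_pow_dvd_iff.1 hdiff n (lt_succ_self n))

theorem PowerSeries.X_mul_mk_one_div_factorial_succ (K : Type*) [Field K] [CharZero K] :
    X * mk (fun k => (1 : K) / (k + 1)!) = exp K - 1 := by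
  ext (_ | k) <;> simp [coeff_succ_X_mul, coeff_exp]

theorem PowerSeries.coeff_one_sub_exp_pow (K : Type*) [Field K] [CharZero K] (k m : ℕ) :
    coeff m ((1 - exp K) ^ k) =
      (∑ j ∈ range (k + 1), (-1 : K) ^ j * k.choose j * (j : K) ^ m) / m ! := by
  rw [sub_eq_add_neg, add_comm, add_pow, map_sum, sum_div]
  refine sum_congr rfl fun j _ => ?_
  rw [one_pow, mul_one, neg_pow, exp_pow_eq_rescale_exp,
    show ((-1 : K⟦X⟧) ^ j) = C ((-1 : K) ^ j) by simp, ← map_natCast (C (R := K)),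
    mul_right_comm, ← map_mul, coeff_C_mul, coeff_rescale, coeff_exp]
  simp only [one_div, map_inv₀, map_natCast]
  ring

theorem PowerSeries.coeff_neg_mk_one_div_factorial_succ_pow (K : Type*) [Field K] [CharZero K]
    (k n : ℕ) : coeff n ((-mk fun k => (1 : K) / (k + 1)!) ^ k) =
      (∑ j ∈ range (k + 1), (-1 : K) ^ j * k.choose j * (j : K) ^ (n + k)) / (n + k)! := by
  rw [← coeff_one_sub_exp_pow, ← coeff_X_pow_mul, ← mul_pow, mul_neg,
    X_mul_mk_one_div_factorial_succ, neg_sub]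

theorem PowerSeries.coeff_inv_pow_eq_sum_coeff_neg_pow {K : Type*} [Field K] {F : K⟦X⟧}
    (hF : constantCoeff F = 1) (l n : ℕ) :
    coeff n (F⁻¹ ^ l) = ∑ k ∈ range (n + 1),
      ((l + n).choose (n - k) * l.multichoose k : ℕ) * coeff n ((-F) ^ k) := by
  have hX : X ^ (n + 1) ∣ (1 - F) ^ (n + 1) := pow_dvd_pow_of_dvd (X_dvd_iff.2 (by simp [hF])) _
  have key := hX.trans (pow_dvd_one_sub_pow_mul_sum_multichoose_sub_one l n (1 - F))
  rw [sub_sub_cancel, sub_eq_add_neg 1 F, sum_multichoose_mul_one_add_pow] at key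
  rw [coeff_inv_pow_eq_of_X_pow_dvd (by simp [hF]) key, map_sum]
  exact sum_congr rfl fun k _ => by rw [← map_natCast (C (R := K)), coeff_C_mul]

theorem stmt_10 (l n : ℕ) :
    genBernoulli l n =
      ∑ k ∈ range (n + 1),
        ((l + n).choose (n - k) : ℚ) * ((l + k - 1).choose k : ℚ) *
          ((n ! : ℚ) / ((n + k)! : ℚ)) *
          ∑ j ∈ range (k + 1), (-1 : ℚ) ^ j * (k.choose j : ℚ) * (j : ℚ) ^ (n + k) := by
  rw [genBernoulli, coeff_inv_pow_eq_sum_coeff_neg_pow (by simp) l n, mul_sum]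
  refine sum_congr rfl fun k _ => ?_
  rw [coeff_neg_mk_one_div_factorial_succ_pow, multichoose_eq]
  push_cast
  ring
end

section
/- The improper integral ∫_0^1 1/asech(u) du converges, where asech(u) = log(1/u + √(1/u² − 1)). -/
open Real MeasureTheory

/-- The inverse hyperbolic secant on (0,1]. -/
noncomputable def asech (u : ℝ) : ℝ := Real.log (1 / u + Real.sqrt (1 / u ^ 2 - 1))

lemma asech_lower {u : ℝ} (h0 : 0 < u) (h1 : u < 1) :
    Real.sqrt (1 - u) / 2 ≤ asech u := by
  have htnn : (0:ℝ) ≤ 1 - u := by linarith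
  set t := Real.sqrt (1 - u) with ht
  have ht0 : 0 ≤ t := Real.sqrt_nonneg _
  have ht1 : t ≤ 1 := Real.sqrt_le_one.2 (by linarith)
  -- step 1 : 1 + t ≤ 1/u + sqrt(1/u^2 - 1)
  have hu2 : (0:ℝ) < u ^ 2 := by positivity
  have hsub : (1 - u) ≤ 1 / u ^ 2 - 1 := by
    rw [le_sub_iff_add_le, le_div_iff₀ hu2]
    nlinarith [mul_nonneg (by linarith : (0:ℝ) ≤ 1 - u) (mul_nonneg h0.le (by linarith : (0:ℝ) ≤ 1 - u))]
  have h1u : (1:ℝ) ≤ 1 / u := by rw [le_div_iff₀ h0]; linarith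
  have hstep1 : 1 + t ≤ 1 / u + Real.sqrt (1 / u ^ 2 - 1) := by
    have := Real.sqrt_le_sqrt hsub
    rw [← ht] at this
    linarith
  -- step 2 : log (1+t) ≥ t/2
  have h1t : (0:ℝ) < 1 + t := by linarith
  have hloglb : 1 - 1 / (1 + t) ≤ Real.log (1 + t) := by
    have := Real.log_le_sub_one_of_pos (show (0:ℝ) < 1 / (1 + t) by positivity)
    rw [Real.log_div one_ne_zero (ne_of_gt h1t), Real.log_one] at this
    linarith
  have hfrac : t / 2 ≤ 1 - 1 / (1 + t) := by
    have : 1 / (1 + t) ≤ 1 - t / 2 := by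
      rw [div_le_iff₀ h1t]
      nlinarith
    linarith
  have hmono : Real.log (1 + t) ≤ asech u :=
    Real.log_le_log h1t hstep1
  unfold asech at *
  linarith

theorem stmt_13 : IntegrableOn (fun u : ℝ => 1 / asech u) (Set.Ioo 0 1) := by
  have hg : IntegrableOn (fun u : ℝ => 2 * (1 - u) ^ (-(1/2) : ℝ)) (Set.Ioo 0 1) := by
    have h1 : IntervalIntegrable (fun x : ℝ => x ^ (-(1/2) : ℝ)) volume 0 1 :=
      intervalIntegral.intervalIntegrable_rpow' (by norm_num)
    have h2 : IntervalIntegrable (fun x : ℝ => (1 - x) ^ (-(1/2) : ℝ)) volume 0 1 := by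
      have := (h1.comp_sub_left 1).symm
      simpa using this
    have := (intervalIntegrable_iff_integrableOn_Ioo_of_le (by norm_num : (0:ℝ) ≤ 1)).1 h2
    exact this.const_mul 2
  apply hg.mono'
  · apply Measurable.aestronglyMeasurable
    unfold asech
    have hm : Measurable fun u : ℝ => 1 / u + Real.sqrt (1 / u ^ 2 - 1) :=
      (measurable_const.div measurable_id).add
        (((measurable_const.div (measurable_id.pow_const 2)).sub measurable_const).sqrt)
    exact measurable_const.div (Real.measurable_log.comp hm)
  · filter_upwards [ae_restrict_mem measurableSet_Ioo] with u hu
    obtain ⟨h0, h1⟩ := hu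
    have hs : 0 < Real.sqrt (1 - u) := Real.sqrt_pos.2 (by linarith)
    have hlb := asech_lower h0 h1
    have hpos : 0 < asech u := lt_of_lt_of_le (by positivity) hlb
    rw [Real.norm_eq_abs, abs_of_nonneg (by positivity)]
    have key : 1 / asech u ≤ 1 / (Real.sqrt (1 - u) / 2) :=
      one_div_le_one_div_of_le (by positivity) hlb
    have hrw : (1 - u) ^ (-(1/2) : ℝ) = 1 / Real.sqrt (1 - u) := by
      rw [Real.rpow_neg (by linarith), ← Real.sqrt_eq_rpow, one_div]
    rw [hrw]
    rw [one_div_div] at key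
    rw [mul_one_div]
    linarith
end

section
/- For positive integers l, define q_j^{(l)} for 1 ≤ j ≤ ⌈l/2⌉ by q_1^{(l)} = 1 and q_j^{(l)} = 1 − ∑_{κ=1}^{j−1} C(l+1−2κ, j−κ) q_κ^{(l)} for j ≥ 2. Then for all real u ≠ 0, ∑_{p=0}^{l−1} e^{(2p+1−l)u}/(e^u + e^{−u})^l = ∑_{j=1}^{⌈l/2⌉} q_j^{(l)}/(e^u + e^{−u})^{2j−1}. -/
/-!
Multiplying by `(e^u + e^{-u})^l` and substituting `X = e^{2u}`, the identity becomes the polynomial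
identity `∑_{p<l} X^p = ∑_j q_j X^{j-1} (1 + X)^{l+1-2j}`. Both sides are palindromic of degree
`l - 1`, so it suffices to compare the coefficients of `X^{k-1}` for `2k ≤ l + 1`, and there the
comparison `∑_{j≤k} C(l+1-2j, k-j) q_j = 1` is the recursion defining `q`.
-/

open Real Finset

/-- The integer coefficients `q_j^{(l)}`: `q_1^{(l)} = 1` and, for `j ≥ 2`,
`q_j^{(l)} = 1 - ∑_{κ=1}^{j-1} C(l+1-2κ, j-κ) q_κ^{(l)}`. -/
def q (l : ℕ) : ℕ → ℤ := fun j =>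
  1 - ∑ κ ∈ (Finset.Ico 1 j).attach,
      ((l + 1 - 2 * κ.1).choose (j - κ.1) : ℤ) * q l κ.1
decreasing_by exact (Finset.mem_Ico.mp κ.2).2

open Polynomial

theorem sum_Icc_choose_mul_q (l : ℕ) {k : ℕ} (hk : 1 ≤ k) :
    ∑ j ∈ Icc 1 k, ((l + 1 - 2 * j).choose (k - j) : ℤ) * q l j = 1 := by
  have hq : q l k = 1 - ∑ j ∈ Ico 1 k, ((l + 1 - 2 * j).choose (k - j) : ℤ) * q l j := by
    rw [q, sum_attach (Ico 1 k) fun j => ((l + 1 - 2 * j).choose (k - j) : ℤ) * q l j]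
  rw [← Ico_add_one_right_eq_Icc, sum_Ico_succ_top hk, hq, Nat.sub_self, Nat.choose_zero_right]
  ring

theorem ite_choose_sub_symm {N j k : ℕ} (hj : 2 * j ≤ N) (hk : k ≤ N) :
    (if j ≤ k then (N - 2 * j).choose (k - j) else 0) =
      if j ≤ N - k then (N - 2 * j).choose (N - k - j) else 0 := by
  split_ifs with h₁ h₂ h₂
  · exact Nat.choose_symm_of_eq_add (by omega)
  · exact Nat.choose_eq_zero_of_lt (by omega)
  · exact (Nat.choose_eq_zero_of_lt (by omega)).symm
  · rfl

theorem sum_ite_choose_mul_q (l : ℕ) {k : ℕ} (hk₁ : 1 ≤ k) (hk₂ : k ≤ l) :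
    ∑ j ∈ Icc 1 ((l + 1) / 2),
      ((if j ≤ k then (l + 1 - 2 * j).choose (k - j) else 0 : ℕ) : ℤ) * q l j = 1 := by
  wlog hkl : 2 * k ≤ l + 1 generalizing k
  · rw [← this (k := l + 1 - k) (by omega) (by omega) (by omega)]
    refine sum_congr rfl fun j hj => ?_
    rw [ite_choose_sub_symm (by rw [mem_Icc] at hj; omega) (by omega)]
  rw [← sum_Icc_choose_mul_q l hk₁]
  simp only [Nat.cast_ite, Nat.cast_zero, ite_mul, zero_mul, ← sum_filter]
  congr 1
  ext j
  simp only [mem_filter, mem_Icc]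
  omega

theorem sum_range_X_pow_eq_sum_q (R : Type*) [CommRing R] (l : ℕ) :
    ∑ p ∈ range l, (X : R[X]) ^ p =
      ∑ j ∈ Icc 1 ((l + 1) / 2), C (q l j : R) * (X ^ (j - 1) * (1 + X) ^ (l + 1 - 2 * j)) := by
  ext n
  simp only [finsetSum_coeff, coeff_X_pow, coeff_C_mul, coeff_X_pow_mul', coeff_one_add_X_pow,
    sum_ite_eq, mem_range]
  split_ifs with hn
  · have h := congrArg (Int.cast : ℤ → R) (sum_ite_choose_mul_q l (k := n + 1) (by omega) hn)
    push_cast at h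
    rw [← h]
    refine sum_congr rfl fun j hj => ?_
    rw [mem_Icc] at hj
    rw [mul_comm, show n - (j - 1) = n + 1 - j by omega]
    simp only [show j - 1 ≤ n ↔ j ≤ n + 1 by omega]
  · refine (sum_eq_zero fun j hj => ?_).symm
    rw [mem_Icc] at hj
    rw [Nat.choose_eq_zero_of_lt (by omega)]
    simp

theorem natCeil_natCast_div_two (m : ℕ) : ⌈(m : ℚ) / 2⌉₊ = (m + 1) / 2 := by
  rcases Nat.even_or_odd' m with ⟨k, rfl | rfl⟩
  · rw [show (2 * k + 1) / 2 = k by omega]; push_cast; simp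
  · rw [show (2 * k + 1 + 1) / 2 = k + 1 by omega, Nat.ceil_eq_iff (by omega)]
    push_cast
    constructor <;> linarith

theorem sum_exp_eq_sum_q_mul_pow (l : ℕ) (u : ℝ) :
    ∑ p ∈ range l, exp ((2 * (p : ℝ) + 1 - l) * u) =
      ∑ j ∈ Icc 1 ((l + 1) / 2), (q l j : ℝ) * (exp u + exp (-u)) ^ (l + 1 - 2 * j) := by
  have h := congrArg (eval (exp (2 * u))) (sum_range_X_pow_eq_sum_q ℝ l)
  simp only [eval_finsetSum, eval_pow, eval_X, eval_mul, eval_C, eval_add, eval_one] at h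
  have hexp : exp ((1 - l) * u) * ∑ p ∈ range l, exp (2 * u) ^ p =
      ∑ p ∈ range l, exp ((2 * (p : ℝ) + 1 - l) * u) := by
    rw [mul_sum]
    refine sum_congr rfl fun p _ => ?_
    rw [← exp_nat_mul, ← exp_add]
    ring_nf
  rw [← hexp, h, mul_sum]
  refine sum_congr rfl fun j hj => ?_
  rw [mem_Icc] at hj
  have hfactor : 1 + exp (2 * u) = exp u * (exp u + exp (-u)) := by
    rw [mul_add, ← exp_add, ← exp_add, add_neg_cancel, exp_zero, ← two_mul, add_comm]
  have hcancel : exp ((1 - l) * u) * exp (2 * u) ^ (j - 1) * exp u ^ (l + 1 - 2 * j) = 1 := by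
    rw [← exp_nat_mul, ← exp_nat_mul, ← exp_add, ← exp_add, exp_eq_one_iff]
    push_cast [Nat.cast_sub (show 1 ≤ j by omega), Nat.cast_sub (show 2 * j ≤ l + 1 by omega)]
    ring
  rw [hfactor, mul_pow]
  linear_combination (q l j : ℝ) * (exp u + exp (-u)) ^ (l + 1 - 2 * j) * hcancel

theorem stmt_17_general (l : ℕ) (u : ℝ) :
    ∑ p ∈ Finset.range l,
        Real.exp ((2 * (p : ℝ) + 1 - l) * u) / (Real.exp u + Real.exp (-u)) ^ l =
      ∑ j ∈ Finset.Icc 1 (Nat.ceil ((l : ℚ) / 2)),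
        (q l j : ℝ) / (Real.exp u + Real.exp (-u)) ^ (2 * j - 1) := by
  have hc : 0 < exp u + exp (-u) := by positivity
  rw [natCeil_natCast_div_two, ← sum_div, sum_exp_eq_sum_q_mul_pow, sum_div]
  refine sum_congr rfl fun j hj => ?_
  rw [mem_Icc] at hj
  rw [div_eq_div_iff (by positivity) (by positivity), mul_assoc, ← pow_add]
  congr 2
  omega

theorem stmt_17 (l : ℕ) (hl : 0 < l) (u : ℝ) (hu : u ≠ 0) :
    ∑ p ∈ Finset.range l,
        Real.exp ((2 * (p : ℝ) + 1 - l) * u) / (Real.exp u + Real.exp (-u)) ^ l =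
      ∑ j ∈ Finset.Icc 1 (Nat.ceil ((l : ℚ) / 2)),
        (q l j : ℝ) / (Real.exp u + Real.exp (-u)) ^ (2 * j - 1) :=
  stmt_17_general l u
end
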